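/- arXiv:2112.06983 — 2 statements merged into one kernel-verified Lean document; each statement's English description precedes it below -/
import Mathlib

section
/- Let m ≥ 1. For all natural numbers n and s, as an identity in ℤ: P_m^n(s) = W_m(mn − s) + Σ_{i=1}^{m−1} (−1)^{m−i} Σ_{k=0}^{n i − s − s_{m−i}} W_i(k) · W_{m−i}(n i − s − s_{m−i} − k), where any inner sum whose upper limit is negative is empty (equals 0), and W_m(t) = 0 for t < 0. -/
/-!
Write `A_j = 1 / (q; q)_j`, whose coefficients are `W_j`, and
`F(m, n, σ) = ∑_{i+j=m} (-1)^j [q^(n i - σ - tri j)] A_i A_j` (`gaussAltSum`); the right-hand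
side of the theorem is `F(m, n, s)` with the terms `j = 0` and `i = 0` (which vanishes) taken out.

Since `A_{i+1} = A_i + q^(i+1) A_{i+1}`, `F` obeys the recurrence
`F(m+1, n+1, σ) = F(m, n+1, σ - n - 1) + F(m+1, n, σ)` of the Gaussian coefficients. `P` obeys it
too: a partition with parts `≤ m + 1` and at most `n + 1` parts either has at most `n` parts, or
exactly `n + 1`, and then removing its first column leaves a partition of `σ - n - 1` with parts
`≤ m`. The boundary values agree: `m = 0` is trivial, and `n = 0` amounts to
`∑_{i+j=m} (-1)^j q^(tri j) A_i A_j = 1` (the `q`-binomial theorem at `z = q`), which follows by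
induction on `m` after multiplying by `1 - q^(m+1) = (1 - q^i) + q^i (1 - q^j)` for `i + j = m + 1`.
-/

open Finset

/-- `W t d` : the number of tuples `x` of nonnegative integers with `∑ i, d i * x i = t`. -/
noncomputable def W (t : ℤ) (d : List ℕ) : ℕ :=
  Nat.card {x : Fin d.length → ℕ // ∑ i, (d.get i : ℤ) * (x i : ℤ) = t}

/-- `Wm j t` : the restricted partition function `W(t, (1,2,…,j))`. -/
noncomputable def Wm (j : ℕ) (t : ℤ) : ℕ :=
  W t ((List.range j).map (· + 1))

/-- `P m n s` : the Gaussian polynomial coefficient, i.e. the number of tuples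
`(x_1,…,x_m)` of nonnegative integers with `∑ i, i * x_i = s` and `∑ i, x_i ≤ n`. -/
noncomputable def P (m n s : ℕ) : ℕ :=
  Nat.card {x : Fin m → ℕ // (∑ i : Fin m, ((i : ℕ) + 1) * x i = s) ∧ ∑ i, x i ≤ n}

/-- `tri j = j(j+1)/2`, the `j`-th triangular number. -/
def tri (j : ℕ) : ℕ := j * (j + 1) / 2

def wsum {j : ℕ} (x : Fin j → ℕ) : ℕ := ∑ i : Fin j, ((i : ℕ) + 1) * x i

lemma le_wsum {j : ℕ} (x : Fin j → ℕ) (i : Fin j) : x i ≤ wsum x :=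
  (Nat.le_mul_of_pos_left _ i.val.succ_pos).trans
    (single_le_sum (f := fun i : Fin j => ((i : ℕ) + 1) * x i) (by simp) (mem_univ i))

lemma wsum_snoc {j : ℕ} (y : Fin j → ℕ) (v : ℕ) :
    wsum (Fin.snoc y v : Fin (j + 1) → ℕ) = wsum y + (j + 1) * v := by
  simp [wsum, Fin.sum_univ_castSucc]

lemma wsum_eq_wsum_init_add {j : ℕ} (x : Fin (j + 1) → ℕ) :
    wsum x = wsum (Fin.init x) + (j + 1) * x (Fin.last j) := by
  rw [← wsum_snoc, Fin.snoc_init_self]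

lemma wsum_cons {m : ℕ} (a : ℕ) (y : Fin m → ℕ) :
    wsum (Fin.cons a y : Fin (m + 1) → ℕ) =
      ∑ i, (Fin.cons a y : Fin (m + 1) → ℕ) i + wsum y := by
  simp only [wsum, Fin.sum_univ_succ, Fin.cons_zero, Fin.cons_succ, Fin.val_zero, Fin.val_succ]
  rw [add_assoc, ← sum_add_distrib]
  congr 1
  · ring
  · exact sum_congr rfl fun i _ => by ring

lemma wsum_eq_sum_add_wsum_tail {m : ℕ} (x : Fin (m + 1) → ℕ) :
    wsum x = ∑ i, x i + wsum (Fin.tail x) := by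
  simpa using wsum_cons (x 0) (Fin.tail x)

instance {j : ℕ} (t : ℤ) : Finite {x : Fin j → ℕ // (wsum x : ℤ) = t} :=
  Set.Finite.to_subtype <| (Set.finite_Iic fun _ => t.toNat).subset fun x hx i => by
    have h : (wsum x : ℤ) = t := hx
    have := le_wsum x i
    show x i ≤ t.toNat
    omega

instance {m : ℕ} (n : ℕ) (σ : ℤ) :
    Finite {x : Fin m → ℕ // (wsum x : ℤ) = σ ∧ ∑ i, x i ≤ n} :=
  Finite.of_injective (fun x => (⟨x.1, x.2.1⟩ : {x : Fin m → ℕ // (wsum x : ℤ) = σ}))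
    fun _ _ h => Subtype.ext (by simpa using congrArg Subtype.val h)

lemma Wm_eq_card (j : ℕ) (t : ℤ) :
    Wm j t = Nat.card {x : Fin j → ℕ // (wsum x : ℤ) = t} := by
  unfold Wm W
  have hlen : ((List.range j).map (· + 1)).length = j := by simp
  refine Nat.card_congr <|
    (Equiv.arrowCongr (finCongr hlen) (Equiv.refl ℕ)).subtypeEquiv fun x => ?_
  simp only [wsum, Equiv.arrowCongr_apply, Equiv.coe_refl]
  push_cast
  rw [← (finCongr hlen).symm.sum_comp]
  simp

lemma Wm_of_neg {j : ℕ} {t : ℤ} (ht : t < 0) : Wm j t = 0 := by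
  rw [Wm_eq_card, Nat.card_eq_zero]
  exact Or.inl ⟨fun x => by have := x.2; omega⟩

lemma Wm_zero (t : ℤ) : Wm 0 t = if t = 0 then 1 else 0 := by
  rw [Wm_eq_card]
  by_cases h : t = 0 <;> simp [wsum, eq_comm, h]

def splitLastEquiv (j : ℕ) (t : ℤ) :
    {x : Fin (j + 1) → ℕ // (wsum x : ℤ) = t} ≃
      {y : Fin j → ℕ // (wsum y : ℤ) = t} ⊕
        {x : Fin (j + 1) → ℕ // (wsum x : ℤ) = t - (j + 1)} where
  toFun x :=
    if h : x.1 (Fin.last j) = 0 then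
      .inl ⟨Fin.init x.1, by
        have := x.2; rw [wsum_eq_wsum_init_add, h] at this; simpa using this⟩
    else
      .inr ⟨Fin.snoc (Fin.init x.1) (x.1 (Fin.last j) - 1), by
        have hx := x.2
        obtain ⟨v, hv⟩ := Nat.exists_eq_succ_of_ne_zero h
        rw [wsum_eq_wsum_init_add, hv] at hx
        rw [wsum_snoc, hv, Nat.succ_sub_one]
        push_cast at hx ⊢
        linear_combination hx⟩
  invFun := Sum.elim (fun y => ⟨Fin.snoc y.1 0, by simpa [wsum_snoc] using y.2⟩)
    (fun x => ⟨Fin.snoc (Fin.init x.1) (x.1 (Fin.last j) + 1), by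
      have hx := x.2
      rw [wsum_eq_wsum_init_add] at hx
      rw [wsum_snoc]
      push_cast at hx ⊢
      linear_combination hx⟩)
  left_inv x := by
    by_cases h : x.1 (Fin.last j) = 0
    · simp only [h, dif_pos, Sum.elim_inl]
      exact Subtype.ext (by dsimp only; rw [← h, Fin.snoc_init_self])
    · simp only [h, dif_neg, not_false_iff, Sum.elim_inr]
      exact Subtype.ext (by
        dsimp only
        rw [Fin.init_snoc, Fin.snoc_last, Nat.sub_add_cancel (Nat.one_le_iff_ne_zero.mpr h),
          Fin.snoc_init_self])
  right_inv
    | .inl y => by simp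
    | .inr x => by simp

lemma Wm_succ (j : ℕ) (t : ℤ) : Wm (j + 1) t = Wm j t + Wm (j + 1) (t - (j + 1)) := by
  rw [Wm_eq_card, Wm_eq_card, Wm_eq_card, Nat.card_congr (splitLastEquiv j t), Nat.card_sum]

/-- The coefficient of `q ^ T` in `A_a A_b`. -/
noncomputable def convW (a b : ℕ) (T : ℤ) : ℤ :=
  ∑ k ∈ range (T + 1).toNat, (Wm a k : ℤ) * Wm b (T - k)

lemma convW_of_neg {a b : ℕ} {T : ℤ} (hT : T < 0) : convW a b T = 0 := by
  simp [convW, show (T + 1).toNat = 0 by omega]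

lemma convW_eq_sum_range {a b : ℕ} {T : ℤ} {N : ℕ} (hN : T < N) :
    convW a b T = ∑ k ∈ range N, (Wm a k : ℤ) * Wm b (T - k) := by
  refine sum_subset (range_subset_range.mpr (by omega)) fun k _ hk => ?_
  rw [mem_range] at hk
  rw [Wm_of_neg (j := b) (by omega), Nat.cast_zero, mul_zero]

lemma convW_comm (a b : ℕ) (T : ℤ) : convW a b T = convW b a T := by
  unfold convW
  rw [← sum_range_reflect]
  refine sum_congr rfl fun k hk => ?_
  rw [mem_range] at hk
  rw [mul_comm, show (((T + 1).toNat - 1 - k : ℕ) : ℤ) = T - k by omega, sub_sub_cancel]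

lemma convW_zero_left (b : ℕ) (T : ℤ) : convW 0 b T = Wm b T := by
  rcases lt_or_ge T 0 with hT | hT
  · rw [convW_of_neg hT, Wm_of_neg hT, Nat.cast_zero]
  · rw [convW, sum_eq_single_of_mem 0 (mem_range.mpr (by omega))
      fun k _ hk => by simp [Wm_zero, hk]]
    simp [Wm_zero]

lemma convW_zero_right (a : ℕ) (T : ℤ) : convW a 0 T = Wm a T := by
  rw [convW_comm, convW_zero_left]

lemma convW_succ_right (a b : ℕ) (T : ℤ) :
    convW a (b + 1) T = convW a b T + convW a (b + 1) (T - (b + 1)) := by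
  rw [convW_eq_sum_range (N := (T + 1).toNat) (T := T - (b + 1)) (by omega), convW,
    convW, ← sum_add_distrib]
  refine sum_congr rfl fun k _ => ?_
  rw [Wm_succ, sub_right_comm]
  push_cast
  ring

lemma convW_succ_left (a b : ℕ) (T : ℤ) :
    convW (a + 1) b T = convW a b T + convW (a + 1) b (T - (a + 1)) := by
  rw [convW_comm, convW_succ_right, convW_comm b, convW_comm b]

lemma tri_succ (j : ℕ) : tri (j + 1) = tri j + (j + 1) := by
  unfold tri
  have : (j + 1) * (j + 1 + 1) = j * (j + 1) + 2 * (j + 1) := by ring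
  omega

noncomputable def altConvSum (m : ℕ) (t : ℤ) : ℤ :=
  ∑ p ∈ antidiagonal m, (-1) ^ p.2 * convW p.1 p.2 (t - tri p.2)

lemma altConvSum_of_neg {m : ℕ} {t : ℤ} (ht : t < 0) : altConvSum m t = 0 :=
  sum_eq_zero fun p _ => by rw [convW_of_neg (by omega), mul_zero]

lemma altConvSum_zero (t : ℤ) : altConvSum 0 t = if t = 0 then 1 else 0 := by
  simp [altConvSum, tri, convW_zero_left, Wm_zero, apply_ite]

lemma convW_succ_succ_sub (i j : ℕ) (T : ℤ) :
    convW (i + 1) (j + 1) T - convW (i + 1) (j + 1) (T - (i + j + 2)) =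
      convW i (j + 1) T + convW (i + 1) j (T - (i + 1)) := by
  rw [convW_succ_left i, convW_succ_right (i + 1) j (T - (i + 1)),
    show T - (i + j + 2) = T - (i + 1) - (j + 1) by ring]
  ring

lemma altConvSum_succ_sub (m : ℕ) (t : ℤ) :
    altConvSum (m + 1) t - altConvSum (m + 1) (t - (m + 1)) =
      altConvSum m t - altConvSum m (t - (m + 1)) := by
  set g : ℕ × ℕ → ℤ → ℤ := fun p t => (-1) ^ p.2 * convW p.1 p.2 (t - tri p.2)
  -- `(1 - q^(i+j)) A_i A_j = A_{i-1} A_j + q^i A_i A_{j-1}`, where `A_{-1} = 0`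
  have key : ∀ p ∈ antidiagonal (m + 1), g p t - g p (t - (m + 1)) =
      (if p.1 = 0 then 0 else g (p.1 - 1, p.2) t) -
        (if p.2 = 0 then 0 else g (p.1, p.2 - 1) (t - (m + 1))) := by
    rintro ⟨_ | i, _ | j⟩ hp <;> rw [HasAntidiagonal.mem_antidiagonal] at hp
    · omega
    · obtain rfl : j = m := by omega
      simp only [g, tri_succ, if_pos, if_neg, Nat.succ_ne_zero, not_false_iff, Nat.add_sub_cancel]
      rw [convW_succ_right]
      push_cast
      ring_nf
    · obtain rfl : i = m := by omega
      simp only [g, if_pos, if_neg, Nat.succ_ne_zero, not_false_iff, Nat.add_sub_cancel]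
      rw [convW_succ_left]
      push_cast
      ring_nf
    · simp only [g, tri_succ, if_neg, Nat.succ_ne_zero, not_false_iff, Nat.add_sub_cancel]
      have := convW_succ_succ_sub i j (t - (tri j + j + 1 : ℕ))
      obtain rfl : m = i + j + 1 := by simp only at hp; omega
      push_cast at this ⊢
      ring_nf at this ⊢
      linear_combination -(-1) ^ j * this
  simp only [altConvSum]
  rw [← sum_sub_distrib, sum_congr rfl key, sum_sub_distrib, Nat.sum_antidiagonal_succ,
    Nat.sum_antidiagonal_succ']
  simp [g]

theorem altConvSum_eq (m : ℕ) (t : ℤ) : altConvSum m t = if t = 0 then 1 else 0 := by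
  induction m generalizing t with
  | zero => exact altConvSum_zero t
  | succ m ih =>
    suffices h : ∀ N : ℕ, t < N → altConvSum (m + 1) t = if t = 0 then 1 else 0 from
      h (t.toNat + 1) (by omega)
    intro N
    induction N generalizing t with
    | zero => intro ht; rw [altConvSum_of_neg (by omega), if_neg (by omega)]
    | succ N ihN =>
      intro ht
      have h := altConvSum_succ_sub m t
      rw [ih, ih, ihN (t - (m + 1)) (by omega)] at h
      linear_combination h

/-- `P` with an integer exponent, `0` below zero, so that its recurrence needs no side
condition. -/
noncomputable def gaussCoeff (m n : ℕ) (σ : ℤ) : ℕ :=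
  Nat.card {x : Fin m → ℕ // (wsum x : ℤ) = σ ∧ ∑ i, x i ≤ n}

lemma P_eq_gaussCoeff (m n s : ℕ) : P m n s = gaussCoeff m n s :=
  Nat.card_congr <| Equiv.subtypeEquivRight fun x => by rw [wsum, Nat.cast_inj]

lemma gaussCoeff_zero_left (n : ℕ) (σ : ℤ) : gaussCoeff 0 n σ = if σ = 0 then 1 else 0 := by
  by_cases h : σ = 0 <;> simp [gaussCoeff, wsum, eq_comm, h]

lemma gaussCoeff_zero_mid (m : ℕ) (σ : ℤ) : gaussCoeff m 0 σ = if σ = 0 then 1 else 0 := by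
  have hcond : ∀ x : Fin m → ℕ,
      ((wsum x : ℤ) = σ ∧ ∑ i, x i ≤ 0) ↔ x = 0 ∧ σ = 0 := by
    refine fun x => ⟨fun ⟨hw, hs⟩ => ?_,
      fun ⟨hx, hσ⟩ => ⟨by simp [hx, hσ, wsum], by simp [hx]⟩⟩
    obtain rfl : x = 0 := funext (by simpa using hs)
    simp_all [wsum]
  rw [gaussCoeff, Nat.card_congr (Equiv.subtypeEquivRight hcond)]
  by_cases h : σ = 0 <;> simp [h]

def splitFirstEquiv (m n : ℕ) (σ : ℤ) :
    {x : Fin (m + 1) → ℕ // (wsum x : ℤ) = σ ∧ ∑ i, x i ≤ n + 1} ≃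
      {x : Fin (m + 1) → ℕ // (wsum x : ℤ) = σ ∧ ∑ i, x i ≤ n} ⊕
        {y : Fin m → ℕ // (wsum y : ℤ) = σ - (n + 1) ∧ ∑ i, y i ≤ n + 1} where
  toFun x :=
    if h : ∑ i, x.1 i ≤ n then .inl ⟨x.1, x.2.1, h⟩
    else .inr ⟨Fin.tail x.1, by
      have hw := wsum_eq_sum_add_wsum_tail x.1
      have hs : ∑ i, x.1 i = x.1 0 + ∑ i, Fin.tail x.1 i := Fin.sum_univ_succ _
      have := x.2
      constructor <;> omega⟩
  invFun := Sum.elim (fun x => ⟨x.1, x.2.1, by have := x.2.2; omega⟩)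
    (fun y => ⟨Fin.cons (n + 1 - ∑ i, y.1 i) y.1, by
      have := y.2
      rw [wsum_cons, Fin.sum_cons]
      constructor <;> omega⟩)
  left_inv x := by
    by_cases h : ∑ i, x.1 i ≤ n
    · simp [h]
    · simp only [h, dif_neg, not_false_iff, Sum.elim_inr]
      refine Subtype.ext ?_
      dsimp only
      have hs : ∑ i, x.1 i = x.1 0 + ∑ i, Fin.tail x.1 i := Fin.sum_univ_succ _
      rw [show n + 1 - ∑ i, Fin.tail x.1 i = x.1 0 by have := x.2.2; omega, Fin.cons_self_tail]
  right_inv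
    | .inl x => by simp [x.2.2]
    | .inr y => by simp [show n < n + 1 - ∑ i, y.1 i + ∑ i, y.1 i by have := y.2.2; omega]

lemma gaussCoeff_succ_succ (m n : ℕ) (σ : ℤ) :
    gaussCoeff (m + 1) (n + 1) σ =
      gaussCoeff (m + 1) n σ + gaussCoeff m (n + 1) (σ - (n + 1)) := by
  rw [gaussCoeff, Nat.card_congr (splitFirstEquiv m n σ), Nat.card_sum]
  rfl

noncomputable def gaussAltSum (m n : ℕ) (σ : ℤ) : ℤ :=
  ∑ p ∈ antidiagonal m, (-1) ^ p.2 * convW p.1 p.2 (n * p.1 - σ - tri p.2)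

lemma gaussAltSum_zero_left (n : ℕ) (σ : ℤ) :
    gaussAltSum 0 n σ = if σ = 0 then 1 else 0 := by
  simpa [gaussAltSum, altConvSum] using altConvSum_zero (-σ)

lemma gaussAltSum_zero_mid (m : ℕ) (σ : ℤ) :
    gaussAltSum m 0 σ = if σ = 0 then 1 else 0 := by
  simpa [gaussAltSum, altConvSum] using altConvSum_eq m (-σ)

lemma gaussAltSum_succ_succ (m n : ℕ) (σ : ℤ) :
    gaussAltSum (m + 1) (n + 1) σ =
      gaussAltSum m (n + 1) (σ - (n + 1)) + gaussAltSum (m + 1) n σ := by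
  simp only [gaussAltSum]
  rw [Nat.sum_antidiagonal_succ, Nat.sum_antidiagonal_succ (n := m), add_left_comm,
    ← sum_add_distrib]
  congr 1
  refine sum_congr rfl fun p _ => ?_
  rw [convW_succ_left]
  push_cast
  ring_nf

theorem gaussAltSum_eq_gaussCoeff (m n : ℕ) (σ : ℤ) :
    gaussAltSum m n σ = gaussCoeff m n σ := by
  induction m generalizing n σ with
  | zero => rw [gaussAltSum_zero_left, gaussCoeff_zero_left]; push_cast; rfl
  | succ m ihm =>
    induction n generalizing σ with
    | zero => rw [gaussAltSum_zero_mid, gaussCoeff_zero_mid]; push_cast; rfl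
    | succ n ihn =>
      rw [gaussAltSum_succ_succ, ihm, ihn, gaussCoeff_succ_succ]
      push_cast
      ring

/-- `P_m^n(s) = W_m(mn−s) + Σ_{i=1}^{m−1} (−1)^{m−i}
Σ_{k=0}^{n i − s − s_{m−i}} W_i(k) W_{m−i}(n i − s − s_{m−i} − k)`,
where a sum with a negative upper limit is empty. -/
theorem gaussian_convolution_formula (m : ℕ) (hm : 1 ≤ m) (n s : ℕ) :
    (P m n s : ℤ) = (Wm m ((m : ℤ) * (n : ℤ) - (s : ℤ)) : ℤ) +
      ∑ i ∈ Finset.Icc 1 (m - 1), (-1 : ℤ) ^ (m - i) *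
        ∑ k ∈ Finset.range
            (((n : ℤ) * (i : ℤ) - (s : ℤ) - (tri (m - i) : ℤ) + 1).toNat),
          (Wm i (k : ℤ) : ℤ) *
            (Wm (m - i) ((n : ℤ) * (i : ℤ) - (s : ℤ) - (tri (m - i) : ℤ) - (k : ℤ)) : ℤ) := by
  obtain ⟨m, rfl⟩ : ∃ k, m = k + 1 := ⟨m - 1, by omega⟩
  rw [P_eq_gaussCoeff, ← gaussAltSum_eq_gaussCoeff, gaussAltSum,
    Nat.sum_antidiagonal_eq_sum_range_succ
      (fun i j => (-1 : ℤ) ^ j * convW i j (n * i - s - tri j)),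
    range_eq_Ico, sum_eq_sum_Ico_succ_bot (by omega), sum_Ico_succ_top (by omega),
    Nat.add_sub_cancel, Ico_add_one_right_eq_Icc]
  have h_first : convW 0 (m + 1) ((n : ℤ) * (0 : ℕ) - s - tri (m + 1)) = 0 :=
    convW_of_neg (by rw [tri_succ]; push_cast; omega)
  simp only [Nat.sub_zero, Nat.sub_self, zero_add]
  rw [h_first, mul_zero, zero_add, add_comm, convW_zero_right]
  congr 1
  simp [tri, mul_comm]
end

section
/- For every natural number s, the restricted partition function W_5 satisfies, as an identity of real numbers: W_5(s) = (s⁴ + 30s³ + 310s² + 1275s + 1687)/2880 + 41/86400 + ((2s+15)/128)·cos(πs) + (2/27)·cos(2πs/3) + (1/16)·( cos(πs/2) + sin(πs/2) ) + (2/25)·( cos(2πs/5) + cos(4πs/5) ). -/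
open Finset

/-!
Peeling off the multiplicity of the part `a` gives `W(t, a :: d) - W(t - a, a :: d) = W(t, d)`, so
the backward differences `∇₁ ∇₂ ∇₃ ∇₄ ∇₅` turn `t ↦ W_5(t)` (zero for `t < 0`) into the indicator
of `t = 0`. The right-hand side, times `86400`, is a quasi-polynomial killed by the same operator:
its polynomial part has degree `4`, its `cos (π s)` part is a linear function times a sign and dies
under `∇₂ ∇₄`, and its remaining parts have periods `3`, `4` and `5`. So both sides satisfy one
linear recursion of order `15`, and they agree at the initial values `t = -14, …, 0`.
-/

lemma W_nil (t : ℤ) : W t [] = if t = 0 then 1 else 0 := by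
  unfold W
  split_ifs with h <;> simp [h, eq_comm]

lemma W_of_neg {t : ℤ} (ht : t < 0) (d : List ℕ) : W t d = 0 := by
  have : IsEmpty {x : Fin d.length → ℕ // ∑ i, (d.get i : ℤ) * (x i : ℤ) = t} := by
    refine ⟨fun ⟨x, hx⟩ => ?_⟩
    have : (0 : ℤ) ≤ ∑ i, (d.get i : ℤ) * (x i : ℤ) := by positivity
    omega
  exact Nat.card_of_isEmpty

lemma finite_W {d : List ℕ} (hd : ∀ b ∈ d, 0 < b) (t : ℤ) :
    Finite {x : Fin d.length → ℕ // ∑ i, (d.get i : ℤ) * (x i : ℤ) = t} := by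
  have hle : ∀ x : Fin d.length → ℕ, ∑ i, (d.get i : ℤ) * (x i : ℤ) = t → ∀ i, x i ≤ t.toNat := by
    intro x hx i
    have hdi : (1 : ℤ) ≤ d.get i := by exact_mod_cast hd _ (List.get_mem ..)
    have : (d.get i : ℤ) * x i ≤ t :=
      hx ▸ single_le_sum (f := fun j => (d.get j : ℤ) * x j) (fun j _ => by positivity) (mem_univ i)
    have : (x i : ℤ) ≤ t := le_trans (le_mul_of_one_le_left (by positivity) hdi) this
    omega
  refine Finite.of_injective
    (fun x i => (⟨x.1 i, Nat.lt_succ_of_le (hle x.1 x.2 i)⟩ : Fin (t.toNat + 1))) ?_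
  intro x y hxy
  ext i
  simpa using congrFun hxy i

def subtypeNatProdEquiv {γ : Type*} (p : ℕ → γ → Prop) :
    {x : ℕ × γ // p x.1 x.2} ≃ {y : γ // p 0 y} ⊕ {x : ℕ × γ // p (x.1 + 1) x.2} where
  toFun
    | ⟨(0, y), h⟩ => .inl ⟨y, h⟩
    | ⟨(k + 1, y), h⟩ => .inr ⟨(k, y), h⟩
  invFun
    | .inl ⟨y, h⟩ => ⟨(0, y), h⟩
    | .inr ⟨(k, y), h⟩ => ⟨(k + 1, y), h⟩
  left_inv := by rintro ⟨⟨_ | k, y⟩, h⟩ <;> rfl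
  right_inv := by rintro (⟨y, h⟩ | ⟨⟨k, y⟩, h⟩) <;> rfl

lemma sum_get_cons_mul (a : ℕ) (d : List ℕ) (k : ℕ) (y : Fin d.length → ℕ) :
    ∑ i, ((a :: d).get i : ℤ) * ((Fin.cons k y : Fin (d.length + 1) → ℕ) i : ℤ) =
      a * k + ∑ i, (d.get i : ℤ) * (y i : ℤ) :=
  Fin.sum_univ_succ _

lemma W_cons {a : ℕ} {d : List ℕ} (hd : ∀ b ∈ a :: d, 0 < b) (t : ℤ) :
    W t (a :: d) = W t d + W (t - a) (a :: d) := by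
  have := finite_W (List.forall_mem_of_forall_mem_cons hd) t
  have := finite_W hd (t - a)
  let e (u : ℤ) := Equiv.subtypeEquiv (p := fun x : ℕ × (Fin d.length → ℕ) =>
      a * (x.1 : ℤ) + ∑ i, (d.get i : ℤ) * (x.2 i : ℤ) = u)
    (q := fun x : Fin (a :: d).length → ℕ => ∑ i, ((a :: d).get i : ℤ) * (x i : ℤ) = u)
    (Fin.consEquiv fun _ => ℕ) fun x => by rw [← sum_get_cons_mul]; rfl
  let split := subtypeNatProdEquiv fun (k : ℕ) (y : Fin d.length → ℕ) =>
    a * (k : ℤ) + ∑ i, (d.get i : ℤ) * (y i : ℤ) = t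
  let e₀ : {y : Fin d.length → ℕ // a * ((0 : ℕ) : ℤ) + ∑ i, (d.get i : ℤ) * (y i : ℤ) = t} ≃
      {y : Fin d.length → ℕ // ∑ i, (d.get i : ℤ) * (y i : ℤ) = t} :=
    Equiv.subtypeEquivRight fun y => by simp
  let e₁ : {x : ℕ × (Fin d.length → ℕ) //
      a * ((x.1 + 1 : ℕ) : ℤ) + ∑ i, (d.get i : ℤ) * (x.2 i : ℤ) = t} ≃
      {x : ℕ × (Fin d.length → ℕ) // a * (x.1 : ℤ) + ∑ i, (d.get i : ℤ) * (x.2 i : ℤ) = t - a} :=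
    Equiv.subtypeEquivRight fun x => by push_cast; constructor <;> intro h <;> linarith
  exact (Nat.card_congr ((e t).symm.trans (split.trans (e₀.sumCongr (e₁.trans (e (t - a))))))).trans
    Nat.card_sum

lemma W_zero {d : List ℕ} (hd : ∀ b ∈ d, 0 < b) : W 0 d = 1 := by
  induction d with
  | nil => simp [W_nil]
  | cons a d ih =>
    rw [W_cons hd, ih (List.forall_mem_of_forall_mem_cons hd), W_of_neg (by simp [hd a (by simp)])]

section BackwardDifference

variable {G : Type*} [AddCommGroup G]

def bdiff (a : ℕ) : (ℤ → G) →+ (ℤ → G) where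
  toFun f t := f t - f (t - a)
  map_zero' := by funext t; simp
  map_add' f g := by funext t; simp only [Pi.add_apply]; abel

@[simp]
lemma bdiff_apply (a : ℕ) (f : ℤ → G) (t : ℤ) : bdiff a f t = f t - f (t - a) := rfl

def bdiffs : List ℕ → (ℤ → G) →+ (ℤ → G)
  | [] => AddMonoidHom.id _
  | a :: d => (bdiffs d).comp (bdiff a)

lemma bdiffs_nil (f : ℤ → G) : bdiffs [] f = f := rfl

lemma bdiffs_cons (a : ℕ) (d : List ℕ) (f : ℤ → G) : bdiffs (a :: d) f = bdiffs d (bdiff a f) :=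
  rfl

lemma bdiff_comm (a b : ℕ) (f : ℤ → G) : bdiff a (bdiff b f) = bdiff b (bdiff a f) := by
  funext t
  simp only [bdiff_apply, sub_right_comm t]
  abel

lemma bdiffs_perm {d d' : List ℕ} (h : d.Perm d') :
    (bdiffs d : (ℤ → G) →+ (ℤ → G)) = bdiffs d' := by
  induction h with
  | nil => rfl
  | cons a _ ih => ext f : 1; rw [bdiffs_cons, bdiffs_cons, ih]
  | swap a b d => ext f : 1; rw [bdiffs_cons, bdiffs_cons, bdiffs_cons, bdiffs_cons, bdiff_comm]
  | trans _ _ ih₁ ih₂ => exact ih₁.trans ih₂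

lemma bdiffs_eq_zero_of_periodic {d : List ℕ} {a : ℕ} (ha : a ∈ d) {f : ℤ → G}
    (hf : Function.Periodic f a) : bdiffs d f = 0 := by
  have hfa : bdiff a f = 0 := funext fun t => by simp [hf.sub_eq]
  rw [bdiffs_perm (List.perm_cons_erase ha), bdiffs_cons, hfa, map_zero]

lemma eq_zero_of_bdiff_eq_zero {a : ℕ} (ha : 0 < a) {f : ℤ → G} {t₀ : ℤ}
    (hinit : ∀ t, t₀ - a ≤ t → t < t₀ → f t = 0) (hdiff : ∀ t, t₀ ≤ t → bdiff a f t = 0) :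
    ∀ t, t₀ - a ≤ t → f t = 0 := by
  have hbelow : ∀ n, t₀ ≤ n → ∀ t, t₀ - a ≤ t → t < n → f t = 0 := by
    intro n hn
    induction n, hn using Int.leInduction with
    | base => exact hinit
    | succ n hn ih =>
      intro t ht htn
      obtain htn | rfl := (Int.lt_add_one_iff.mp htn).lt_or_eq
      · exact ih t ht htn
      · rw [sub_eq_zero.mp (hdiff t hn)]
        exact ih _ (by omega) (by omega)
  intro t ht
  exact hbelow (max t₀ (t + 1)) (le_max_left _ _) t ht (by omega)

lemma eq_zero_of_bdiffs_eq_zero {d : List ℕ} (hd : ∀ a ∈ d, 0 < a) {f : ℤ → G} {t₀ : ℤ}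
    (hinit : ∀ t, t₀ - d.sum ≤ t → t < t₀ → f t = 0) (hdiff : ∀ t, t₀ ≤ t → bdiffs d f t = 0) :
    ∀ t, t₀ - d.sum ≤ t → f t = 0 := by
  induction d generalizing f with
  | nil => exact fun t ht => hdiff t (by simpa using ht)
  | cons a d ih =>
    simp only [List.mem_cons, forall_eq_or_imp] at hd
    simp only [List.sum_cons, Nat.cast_add] at hinit ⊢
    have hfa : ∀ t, t₀ - d.sum ≤ t → bdiff a f t = 0 := by
      refine ih hd.2 (fun t h₁ h₂ => ?_) hdiff
      rw [bdiff_apply, hinit t (by omega) h₂, hinit (t - a) (by omega) (by omega), sub_zero]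
    have hf := eq_zero_of_bdiff_eq_zero hd.1 (t₀ := t₀ - d.sum)
      (fun t h₁ h₂ => hinit t (by omega) (by omega)) hfa
    exact fun t ht => hf t (by omega)

end BackwardDifference

lemma bdiff_W_cons {a : ℕ} {d : List ℕ} (hd : ∀ b ∈ a :: d, 0 < b) :
    bdiff a (fun t => (W t (a :: d) : ℤ)) = fun t => (W t d : ℤ) := by
  funext t
  rw [bdiff_apply, W_cons hd t, Nat.cast_add, add_sub_cancel_right]

lemma bdiffs_W {d : List ℕ} (hd : ∀ b ∈ d, 0 < b) :
    bdiffs d (fun t => (W t d : ℤ)) = fun t => (W t [] : ℤ) := by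
  induction d with
  | nil => rfl
  | cons a d ih => rw [bdiffs_cons, bdiff_W_cons hd, ih (List.forall_mem_of_forall_mem_cons hd)]

def wave2 (t : ℤ) : ℤ := if t % 2 = 0 then 1 else -1
def wave3 (t : ℤ) : ℤ := if t % 3 = 0 then 2 else -1
def wave4 (t : ℤ) : ℤ := if t % 4 ≤ 1 then 1 else -1
def wave5 (t : ℤ) : ℤ := if t % 5 = 0 then 4 else -1

lemma wave2_periodic : Function.Periodic wave2 2 := fun t => by simp [wave2]
lemma wave3_periodic : Function.Periodic wave3 3 := fun t => by simp [wave3]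
lemma wave4_periodic : Function.Periodic wave4 4 := fun t => by simp [wave4]
lemma wave5_periodic : Function.Periodic wave5 5 := fun t => by simp [wave5]

def W5Quasi (t : ℤ) : ℤ :=
  30 * (t ^ 4 + 30 * t ^ 3 + 310 * t ^ 2 + 1275 * t + 1687) + 41 + 675 * (2 * t + 15) * wave2 t
    + 3200 * wave3 t + 5400 * wave4 t + 3456 * wave5 t

lemma bdiffs_W5Quasi : bdiffs [1, 2, 3, 4, 5] W5Quasi = 0 := by
  have hpoly : bdiffs [1, 2, 3, 4, 5]
      (fun t : ℤ => 30 * (t ^ 4 + 30 * t ^ 3 + 310 * t ^ 2 + 1275 * t + 1687) + 41) = 0 := by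
    funext t
    simp only [bdiffs_cons, bdiffs_nil, bdiff_apply, Pi.zero_apply]
    ring
  have hlin : bdiff 2 (fun t => (2 * t + 15) * wave2 t) = 4 • wave2 := by
    funext t
    simp only [bdiff_apply, Nat.cast_ofNat, wave2_periodic.sub_eq, Pi.smul_apply]
    ring
  have halt : bdiffs [1, 2, 3, 4, 5] (fun t => (2 * t + 15) * wave2 t) = 0 := by
    rw [bdiffs_perm (List.perm_cons_erase (a := 2) (by decide)), bdiffs_cons, hlin, map_nsmul,
      bdiffs_eq_zero_of_periodic (a := 4) (by decide) (by simpa using wave2_periodic.nat_mul 2),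
      smul_zero]
  have hsplit : W5Quasi =
      (fun t : ℤ => 30 * (t ^ 4 + 30 * t ^ 3 + 310 * t ^ 2 + 1275 * t + 1687) + 41)
        + 675 • (fun t => (2 * t + 15) * wave2 t) + 3200 • wave3 + 5400 • wave4 + 3456 • wave5 := by
    funext t
    simp only [W5Quasi, Pi.add_apply, Pi.smul_apply]
    ring
  have h3 := bdiffs_eq_zero_of_periodic (d := [1, 2, 3, 4, 5]) (a := 3) (by decide)
    (by simpa using wave3_periodic)
  have h4 := bdiffs_eq_zero_of_periodic (d := [1, 2, 3, 4, 5]) (a := 4) (by decide)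
    (by simpa using wave4_periodic)
  have h5 := bdiffs_eq_zero_of_periodic (d := [1, 2, 3, 4, 5]) (a := 5) (by decide)
    (by simpa using wave5_periodic)
  rw [hsplit]
  simp only [map_add, map_nsmul, hpoly, halt, h3, h4, h5, smul_zero, add_zero]

lemma W5Quasi_initial (t : ℤ) (h₁ : -14 ≤ t) (h₂ : t ≤ 0) :
    W5Quasi t = if t = 0 then 86400 else 0 := by
  interval_cases t <;> decide

lemma W5_eq_W5Quasi {t : ℤ} (ht : -14 ≤ t) : 86400 * (W t [1, 2, 3, 4, 5] : ℤ) = W5Quasi t := by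
  have hpos : ∀ b ∈ [1, 2, 3, 4, 5], 0 < b := by decide
  rw [← sub_eq_zero]
  refine eq_zero_of_bdiffs_eq_zero (f := 86400 • (fun t => (W t [1, 2, 3, 4, 5] : ℤ)) - W5Quasi)
    hpos (t₀ := 1) (fun t h₁ h₂ => ?_) (fun t ht => ?_) t (by simpa using ht)
  · rw [Pi.sub_apply, Pi.smul_apply, W5Quasi_initial t (by simpa using h₁) (by omega)]
    obtain ht | rfl := (show t ≤ 0 by omega).lt_or_eq
    · simp [W_of_neg ht, ht.ne]
    · simp [W_zero hpos]
  · rw [map_sub, map_nsmul, bdiffs_W hpos, bdiffs_W5Quasi]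
    simp [W_nil, show t ≠ 0 by omega]

open Real

lemma Function.Periodic.eq_of_forall_lt {α : Type*} {f g : ℕ → α} {n : ℕ} (hn : 0 < n)
    (hf : Function.Periodic f n) (hg : Function.Periodic g n) (h : ∀ r < n, f r = g r) (s : ℕ) :
    f s = g s := by
  rw [← hf.map_mod_nat, ← hg.map_mod_nat]
  exact h _ (Nat.mod_lt _ hn)

lemma cos_pi_mul_natCast (s : ℕ) : cos (π * s) = wave2 s := by
  refine Function.Periodic.eq_of_forall_lt (f := fun s : ℕ => cos (π * s))
    (g := fun s : ℕ => (wave2 s : ℝ)) two_pos (fun s => ?_) (fun s => ?_) (fun r hr => ?_) s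
  · simp only [Nat.cast_add, Nat.cast_ofNat, mul_add, cos_add_two_pi, mul_comm π 2]
  · simp only [Nat.cast_add, Nat.cast_ofNat, wave2_periodic s]
  · interval_cases r <;> norm_num [wave2]

lemma cos_two_pi_mul_natCast_div_three (s : ℕ) : cos (2 * π * s / 3) = wave3 s / 2 := by
  refine Function.Periodic.eq_of_forall_lt (f := fun s : ℕ => cos (2 * π * s / 3))
    (g := fun s : ℕ => (wave3 s : ℝ) / 2) three_pos (fun s => ?_) (fun s => ?_) (fun r hr => ?_) s
  · simp only [Nat.cast_add, Nat.cast_ofNat]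
    rw [show 2 * π * (s + 3) / 3 = 2 * π * s / 3 + 2 * π by ring, cos_add_two_pi]
  · simp only [Nat.cast_add, Nat.cast_ofNat, wave3_periodic s]
  · interval_cases r <;> norm_num [wave3]
    · rw [show 2 * π / 3 = π - π / 3 by ring, cos_pi_sub, cos_pi_div_three]
    · rw [show 2 * π * 2 / 3 = π / 3 + π by ring, cos_add_pi, cos_pi_div_three]

lemma cos_add_sin_pi_mul_natCast_div_two (s : ℕ) :
    cos (π * s / 2) + sin (π * s / 2) = wave4 s := by
  refine Function.Periodic.eq_of_forall_lt (f := fun s : ℕ => cos (π * s / 2) + sin (π * s / 2))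
    (g := fun s : ℕ => (wave4 s : ℝ)) four_pos (fun s => ?_) (fun s => ?_) (fun r hr => ?_) s
  · simp only [Nat.cast_add, Nat.cast_ofNat]
    rw [show π * (s + 4) / 2 = π * s / 2 + 2 * π by ring, cos_add_two_pi, sin_add_two_pi]
  · simp only [Nat.cast_add, Nat.cast_ofNat, wave4_periodic s]
  · interval_cases r <;> norm_num [wave4]
    rw [show π * 3 / 2 = π / 2 + π by ring, cos_add_pi, sin_add_pi, cos_pi_div_two, sin_pi_div_two]
    norm_num

lemma cos_two_pi_div_five_sub_cos_pi_div_five : cos (2 * π / 5) - cos (π / 5) = -(1 / 2) := by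
  have h5 : √5 ^ 2 = 5 := Real.sq_sqrt (by norm_num)
  rw [show 2 * π / 5 = 2 * (π / 5) by ring, cos_two_mul, cos_pi_div_five]
  linear_combination h5 / 8

lemma cos_four_pi_div_five : cos (4 * π / 5) = -cos (π / 5) := by
  rw [show 4 * π / 5 = π - π / 5 by ring, cos_pi_sub]

lemma cos_add_cos_pi_mul_natCast_div_five (s : ℕ) :
    cos (2 * π * s / 5) + cos (4 * π * s / 5) = wave5 s / 2 := by
  refine Function.Periodic.eq_of_forall_lt
    (f := fun s : ℕ => cos (2 * π * s / 5) + cos (4 * π * s / 5))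
    (g := fun s : ℕ => (wave5 s : ℝ) / 2) (n := 5) (by norm_num) (fun s => ?_) (fun s => ?_)
    (fun r hr => ?_) s
  · simp only [Nat.cast_add, Nat.cast_ofNat]
    rw [show 2 * π * (s + 5) / 5 = 2 * π * s / 5 + 2 * π by ring,
      show 4 * π * (s + 5) / 5 = 4 * π * s / 5 + 2 * π + 2 * π by ring, cos_add_two_pi,
      cos_add_two_pi, cos_add_two_pi]
  · simp only [Nat.cast_add, Nat.cast_ofNat, wave5_periodic s]
  · have key := cos_two_pi_div_five_sub_cos_pi_div_five
    interval_cases r <;> norm_num [wave5]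
    · rw [cos_four_pi_div_five]
      linarith
    · rw [show 2 * π * 2 / 5 = 4 * π / 5 by ring, show 4 * π * 2 / 5 = 2 * π - 2 * π / 5 by ring,
        cos_two_pi_sub, cos_four_pi_div_five]
      linarith
    · rw [show 2 * π * 3 / 5 = π / 5 + π by ring, show 4 * π * 3 / 5 = 2 * π / 5 + 2 * π by ring,
        cos_add_pi, cos_add_two_pi]
      linarith
    · rw [show 2 * π * 4 / 5 = 2 * π - 2 * π / 5 by ring,
        show 4 * π * 4 / 5 = π / 5 + π + 2 * π by ring, cos_two_pi_sub, cos_add_two_pi,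
        cos_add_pi]
      linarith

/-- explicit quasipolynomial expression for `W_5(s)`. -/
theorem W5_explicit (s : ℕ) :
    (Wm 5 (s : ℤ) : ℝ) =
      ((s : ℝ) ^ 4 + 30 * (s : ℝ) ^ 3 + 310 * (s : ℝ) ^ 2 + 1275 * (s : ℝ) + 1687) / 2880
        + 41 / 86400
        + ((2 * (s : ℝ) + 15) / 128) * Real.cos (Real.pi * s)
        + (2 / 27) * Real.cos (2 * Real.pi * s / 3)
        + (1 / 16) * (Real.cos (Real.pi * s / 2) + Real.sin (Real.pi * s / 2))
        + (2 / 25) * (Real.cos (2 * Real.pi * s / 5) + Real.cos (4 * Real.pi * s / 5)) := by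
  have h : (86400 : ℝ) * (W s [1, 2, 3, 4, 5] : ℤ) = (W5Quasi s : ℝ) := by
    exact_mod_cast W5_eq_W5Quasi (t := s) (by omega)
  rw [show Wm 5 s = W s [1, 2, 3, 4, 5] from rfl, cos_pi_mul_natCast,
    cos_two_pi_mul_natCast_div_three, cos_add_sin_pi_mul_natCast_div_two,
    cos_add_cos_pi_mul_natCast_div_five]
  simp only [W5Quasi] at h
  push_cast at h
  linear_combination h / 86400
end
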